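/- If Q_E and Q_p are symmetric positive definite matrices spectrally equivalent to the Schur complements S_E and S_p with constants c₁ ≤ λ(Q_E S_E) ≤ c₂ and c₁ ≤ λ(Q_p S_p) ≤ c₂, then every eigenvalue of the preconditioned matrix X_LS·A = Q·S·U (with X_LS = Q L⁻¹ and A = LSU) lies in [c₁, c₂], since Q S U is block upper triangular with diagonal blocks I, Q_E S_E, Q_p S_p. -/
import Mathlib


open Matrix

/-- A 3×3 block matrix. -/
def blk3 {α : Type*} {l m n : Type*}
    (A11 : Matrix l l α) (A12 : Matrix l m α) (A13 : Matrix l n α)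
    (A21 : Matrix m l α) (A22 : Matrix m m α) (A23 : Matrix m n α)
    (A31 : Matrix n l α) (A32 : Matrix n m α) (A33 : Matrix n n α) :
    Matrix (l ⊕ m ⊕ n) (l ⊕ m ⊕ n) α :=
  Matrix.of fun i j =>
    match i, j with
    | Sum.inl i, Sum.inl j => A11 i j
    | Sum.inl i, Sum.inr (Sum.inl j) => A12 i j
    | Sum.inl i, Sum.inr (Sum.inr j) => A13 i j
    | Sum.inr (Sum.inl i), Sum.inl j => A21 i j
    | Sum.inr (Sum.inl i), Sum.inr (Sum.inl j) => A22 i j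
    | Sum.inr (Sum.inl i), Sum.inr (Sum.inr j) => A23 i j
    | Sum.inr (Sum.inr i), Sum.inl j => A31 i j
    | Sum.inr (Sum.inr i), Sum.inr (Sum.inl j) => A32 i j
    | Sum.inr (Sum.inr i), Sum.inr (Sum.inr j) => A33 i j

section AuxBlk3
variable {l m n : Type*} [Fintype l] [Fintype m] [Fintype n]
  [DecidableEq l] [DecidableEq m] [DecidableEq n]

set_option linter.unusedSectionVars false

theorem blk3_mul
    (A11 : Matrix l l ℝ) (A12 : Matrix l m ℝ) (A13 : Matrix l n ℝ)
    (A21 : Matrix m l ℝ) (A22 : Matrix m m ℝ) (A23 : Matrix m n ℝ)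
    (A31 : Matrix n l ℝ) (A32 : Matrix n m ℝ) (A33 : Matrix n n ℝ)
    (B11 : Matrix l l ℝ) (B12 : Matrix l m ℝ) (B13 : Matrix l n ℝ)
    (B21 : Matrix m l ℝ) (B22 : Matrix m m ℝ) (B23 : Matrix m n ℝ)
    (B31 : Matrix n l ℝ) (B32 : Matrix n m ℝ) (B33 : Matrix n n ℝ) :
    blk3 A11 A12 A13 A21 A22 A23 A31 A32 A33 *
      blk3 B11 B12 B13 B21 B22 B23 B31 B32 B33 =
    blk3 (A11*B11 + A12*B21 + A13*B31) (A11*B12 + A12*B22 + A13*B32) (A11*B13 + A12*B23 + A13*B33)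
         (A21*B11 + A22*B21 + A23*B31) (A21*B12 + A22*B22 + A23*B32) (A21*B13 + A22*B23 + A23*B33)
         (A31*B11 + A32*B21 + A33*B31) (A31*B12 + A32*B22 + A33*B32) (A31*B13 + A32*B23 + A33*B33) := by
  ext i j
  rcases i with i | i | i <;> rcases j with j | j | j <;>
    simp [blk3, Matrix.mul_apply, Matrix.add_apply, Fintype.sum_sum_type] <;> ring

theorem blk3_one :
    blk3 (1 : Matrix l l ℝ) 0 0 0 (1 : Matrix m m ℝ) 0 0 0 (1 : Matrix n n ℝ) = 1 := by
  ext i j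
  rcases i with i | i | i <;> rcases j with j | j | j <;>
    simp [blk3, Matrix.one_apply]

theorem blk3_mulVec
    (A11 : Matrix l l ℝ) (A12 : Matrix l m ℝ) (A13 : Matrix l n ℝ)
    (A21 : Matrix m l ℝ) (A22 : Matrix m m ℝ) (A23 : Matrix m n ℝ)
    (A31 : Matrix n l ℝ) (A32 : Matrix n m ℝ) (A33 : Matrix n n ℝ)
    (x : (l ⊕ m ⊕ n) → ℝ) :
    (blk3 A11 A12 A13 A21 A22 A23 A31 A32 A33) *ᵥ x =
    Sum.elim (A11 *ᵥ (fun j => x (Sum.inl j)) + A12 *ᵥ (fun j => x (Sum.inr (Sum.inl j)))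
        + A13 *ᵥ (fun j => x (Sum.inr (Sum.inr j))))
      (Sum.elim
        (A21 *ᵥ (fun j => x (Sum.inl j)) + A22 *ᵥ (fun j => x (Sum.inr (Sum.inl j)))
          + A23 *ᵥ (fun j => x (Sum.inr (Sum.inr j))))
        (A31 *ᵥ (fun j => x (Sum.inl j)) + A32 *ᵥ (fun j => x (Sum.inr (Sum.inl j)))
          + A33 *ᵥ (fun j => x (Sum.inr (Sum.inr j))))) := by
  ext i
  rcases i with i | i | i <;>
    simp [blk3, Matrix.mulVec, dotProduct, Fintype.sum_sum_type, Pi.add_apply] <;> ring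

end AuxBlk3

/-- If Q_E, Q_p are spectrally equivalent to the Schur complements
S_E, S_p with eigenvalue bounds [c₁, c₂] (0 < c₁ ≤ 1 ≤ c₂), then every (real)
eigenvalue of the preconditioned matrix X_LS·A = Q·L⁻¹·(L·S·U) = Q·S·U lies in
[c₁, c₂]. -/
theorem eigenvalues_XLS_A {nB nE nP : ℕ} (τ : ℝ) (hτ : 0 < τ) (c₁ c₂ : ℝ)
    (hc₁ : 0 < c₁) (hc₁1 : c₁ ≤ 1) (h1c₂ : 1 ≤ c₂)
    (SE QE : Matrix (Fin nE) (Fin nE) ℝ) (Sp Qp : Matrix (Fin nP) (Fin nP) ℝ)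
    (curlD : Matrix (Fin nB) (Fin nE) ℝ) (gradD : Matrix (Fin nE) (Fin nP) ℝ)
    (curlV : Matrix (Fin nE) (Fin nB) ℝ) (divD : Matrix (Fin nP) (Fin nE) ℝ)
    (hQESE : ∀ (μ : ℝ) (x : Fin nE → ℝ), x ≠ 0 → (QE * SE) *ᵥ x = μ • x →
      c₁ ≤ μ ∧ μ ≤ c₂)
    (hQpSp : ∀ (μ : ℝ) (x : Fin nP → ℝ), x ≠ 0 → (Qp * Sp) *ᵥ x = μ • x →
      c₁ ≤ μ ∧ μ ≤ c₂) :
    ∀ (μ : ℝ) (x : (Fin nB ⊕ Fin nE ⊕ Fin nP) → ℝ), x ≠ 0 →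
      (((blk3
            ((τ / 2) • (1 : Matrix (Fin nB) (Fin nB) ℝ)) 0 0
            0 QE 0
            0 0 Qp) *
          (blk3
            (1 : Matrix (Fin nB) (Fin nB) ℝ) 0 0
            (-((τ / 2) • curlV)) (1 : Matrix (Fin nE) (Fin nE) ℝ) 0
            0 (-((τ / 2) • divD)) (1 : Matrix (Fin nP) (Fin nP) ℝ))⁻¹) *
        ((blk3
            (1 : Matrix (Fin nB) (Fin nB) ℝ) 0 0
            (-((τ / 2) • curlV)) (1 : Matrix (Fin nE) (Fin nE) ℝ) 0
            0 (-((τ / 2) • divD)) (1 : Matrix (Fin nP) (Fin nP) ℝ)) *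
          (blk3
            ((2 / τ) • (1 : Matrix (Fin nB) (Fin nB) ℝ)) 0 0
            0 SE 0
            0 0 Sp) *
          (blk3
            (1 : Matrix (Fin nB) (Fin nB) ℝ) ((τ / 2) • curlD) 0
            0 (1 : Matrix (Fin nE) (Fin nE) ℝ) ((τ / 2) • gradD)
            0 0 (1 : Matrix (Fin nP) (Fin nP) ℝ)))) *ᵥ x = μ • x →
      c₁ ≤ μ ∧ μ ≤ c₂ := by
  intro μ x hx hmul
  have hτ0 : τ ≠ 0 := ne_of_gt hτ
  set Q : Matrix (Fin nB ⊕ Fin nE ⊕ Fin nP) (Fin nB ⊕ Fin nE ⊕ Fin nP) ℝ :=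
    blk3 ((τ / 2) • (1 : Matrix (Fin nB) (Fin nB) ℝ)) 0 0 0 QE 0 0 0 Qp with hQ
  set L : Matrix (Fin nB ⊕ Fin nE ⊕ Fin nP) (Fin nB ⊕ Fin nE ⊕ Fin nP) ℝ :=
    blk3 (1 : Matrix (Fin nB) (Fin nB) ℝ) 0 0
      (-((τ / 2) • curlV)) (1 : Matrix (Fin nE) (Fin nE) ℝ) 0
      0 (-((τ / 2) • divD)) (1 : Matrix (Fin nP) (Fin nP) ℝ) with hL
  set S : Matrix (Fin nB ⊕ Fin nE ⊕ Fin nP) (Fin nB ⊕ Fin nE ⊕ Fin nP) ℝ :=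
    blk3 ((2 / τ) • (1 : Matrix (Fin nB) (Fin nB) ℝ)) 0 0 0 SE 0 0 0 Sp with hS
  set U : Matrix (Fin nB ⊕ Fin nE ⊕ Fin nP) (Fin nB ⊕ Fin nE ⊕ Fin nP) ℝ :=
    blk3 (1 : Matrix (Fin nB) (Fin nB) ℝ) ((τ / 2) • curlD) 0
      0 (1 : Matrix (Fin nE) (Fin nE) ℝ) ((τ / 2) • gradD)
      0 0 (1 : Matrix (Fin nP) (Fin nP) ℝ) with hU
  set L' : Matrix (Fin nB ⊕ Fin nE ⊕ Fin nP) (Fin nB ⊕ Fin nE ⊕ Fin nP) ℝ :=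
    blk3 (1 : Matrix (Fin nB) (Fin nB) ℝ) 0 0
      ((τ / 2) • curlV) (1 : Matrix (Fin nE) (Fin nE) ℝ) 0
      (((τ / 2) * (τ / 2)) • (divD * curlV)) ((τ / 2) • divD)
      (1 : Matrix (Fin nP) (Fin nP) ℝ) with hL'
  have hL'L : L' * L = 1 := by
    rw [hL', hL, blk3_mul, ← blk3_one (l := Fin nB) (m := Fin nE) (n := Fin nP)]
    congr 1 <;>
      simp [Matrix.smul_mul, Matrix.mul_smul, smul_smul, Matrix.mul_neg, Matrix.neg_mul]
  have hLinv : L⁻¹ = L' := Matrix.inv_eq_left_inv hL'L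
  have hsc : τ / 2 * (2 / τ) = 1 := by field_simp
  have hQS : Q * S = blk3 (1 : Matrix (Fin nB) (Fin nB) ℝ) 0 0 0 (QE * SE) 0
      0 0 (Qp * Sp) := by
    rw [hQ, hS, blk3_mul]
    congr 1 <;>
      simp [Matrix.smul_mul, Matrix.mul_smul, smul_smul, hsc, div_self hτ0]
  have hQSU : Q * S * U = blk3 (1 : Matrix (Fin nB) (Fin nB) ℝ) ((τ / 2) • curlD) 0
      0 (QE * SE) ((QE * SE) * ((τ / 2) • gradD))
      0 0 (Qp * Sp) := by
    rw [hQS, hU, blk3_mul]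
    congr 1 <;> simp
  have key : Q * L⁻¹ * (L * S * U) = Q * S * U := by
    rw [hLinv]
    simp only [← Matrix.mul_assoc]
    rw [Matrix.mul_assoc Q L' L, hL'L, Matrix.mul_one]
  rw [key, hQSU, blk3_mulVec] at hmul
  set xB : Fin nB → ℝ := fun j => x (Sum.inl j) with hxB
  set xE : Fin nE → ℝ := fun j => x (Sum.inr (Sum.inl j)) with hxE
  set xP : Fin nP → ℝ := fun j => x (Sum.inr (Sum.inr j)) with hxP
  have hPeq : (Qp * Sp) *ᵥ xP = μ • xP := by
    funext i
    have h := congrFun hmul (Sum.inr (Sum.inr i))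
    simpa [Matrix.zero_mulVec] using h
  by_cases hP0 : xP = 0
  · have hEeq : (QE * SE) *ᵥ xE = μ • xE := by
      funext i
      have h := congrFun hmul (Sum.inr (Sum.inl i))
      simpa [Matrix.zero_mulVec, hP0, Matrix.mulVec_zero] using h
    by_cases hE0 : xE = 0
    · have hBne : xB ≠ 0 := by
        intro hB0
        apply hx
        funext i
        rcases i with i | i | i
        · exact congrFun hB0 i
        · exact congrFun hE0 i
        · exact congrFun hP0 i
      obtain ⟨i, hi⟩ := Function.ne_iff.mp hBne
      have hBeq : xB i = μ * xB i := by
        have h := congrFun hmul (Sum.inl i)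
        simpa [Matrix.one_mulVec, hE0, Matrix.mulVec_zero, Matrix.zero_mulVec] using h
      have hμ1 : μ = 1 := by
        have : μ * xB i = 1 * xB i := by linarith
        exact mul_right_cancel₀ hi this
      exact ⟨hμ1 ▸ hc₁1, hμ1 ▸ h1c₂⟩
    · exact hQESE μ xE hE0 hEeq
  · exact hQpSp μ xP hP0 hPeq
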